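/- arXiv:2412.07258 — 5 statements merged into one kernel-verified Lean document; each statement's English description precedes it below -/
import Mathlib

section
/- For g(x) = (e^{β(1-x)}-1)/(e^β-1) with β ≠ 0, the function V(x,y) = u⁻¹(u(x)+u(y)), where u(x) = ∫₀ˣ 1/g(z) dz, equals (1/β)·ln((e^{β(x+1)} + e^{β(y+1)} - e^{β(x+y)} - e^β)/(e^β - 1)) for all x, y ∈ [0,1). -/
/-!
With `w t = (e^β - e^{βt}) / (e^β - 1)` (`expWeight β t`), one has
`1 / g = ((1 - e^β) / β) · (log w)'` on `(-∞, 1)` and `w 0 = 1`,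
so `u = ((1 - e^β) / β) · log w` on `[0, 1)`. Since `w > 0` there, the equation
`u (V x y) = u x + u y` becomes `w (V x y) = w x · w y`, which is linear in `e^{β V x y}`.
-/

open Set Real

lemma div_exp_sub_exp_pos {a b c d : ℝ} (h : 0 < (a - b) * (c - d)) :
    0 < (exp a - exp b) / (exp c - exp d) := by
  rcases mul_pos_iff.mp h with ⟨hab, hcd⟩ | ⟨hab, hcd⟩
  · exact div_pos (sub_pos.mpr (exp_lt_exp.mpr (by linarith)))
      (sub_pos.mpr (exp_lt_exp.mpr (by linarith)))
  · exact div_pos_of_neg_of_neg (sub_neg.mpr (exp_lt_exp.mpr (by linarith)))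
      (sub_neg.mpr (exp_lt_exp.mpr (by linarith)))

lemma exp_sub_one_ne_zero {x : ℝ} (hx : x ≠ 0) : exp x - 1 ≠ 0 :=
  sub_ne_zero.mpr (mt (exp_eq_one_iff x).mp hx)

noncomputable def expWeight (β t : ℝ) : ℝ := (exp β - exp (β * t)) / (exp β - 1)

section expWeight

variable {β : ℝ}

lemma expWeight_zero (hβ : β ≠ 0) : expWeight β 0 = 1 := by
  simp [expWeight, exp_sub_one_ne_zero hβ]

lemma expWeight_pos (hβ : β ≠ 0) {t : ℝ} (ht : t < 1) : 0 < expWeight β t := by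
  have hβ2 : 0 < β * β := mul_self_pos.mpr hβ
  have := div_exp_sub_exp_pos (a := β) (b := β * t) (c := β) (d := 0) (by nlinarith)
  simpa [expWeight] using this

lemma hasDerivAt_log_expWeight (hβ : β ≠ 0) {t : ℝ} (ht : t < 1) :
    HasDerivAt (fun t ↦ (1 - exp β) / β * log (expWeight β t))
      ((exp β - 1) / (exp (β * (1 - t)) - 1)) t := by
  have hw : HasDerivAt (expWeight β) (-(exp (β * t) * β) / (exp β - 1)) t := by
    have := (((hasDerivAt_id t).const_mul β).exp.const_sub (exp β)).div_const (exp β - 1)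
    unfold expWeight
    simpa only [id, mul_one] using this
  refine ((hw.log (expWeight_pos hβ ht).ne').const_mul _).congr_deriv ?_
  have hE : exp β - 1 ≠ 0 := exp_sub_one_ne_zero hβ
  have hD : exp (β * (1 - t)) - 1 ≠ 0 := exp_sub_one_ne_zero (mul_ne_zero hβ (by linarith))
  rw [show β * (1 - t) = β - β * t by ring, exp_sub] at hD ⊢
  simp only [expWeight]
  field_simp
  ring

lemma integral_inv_eq_log_expWeight (hβ : β ≠ 0) {t : ℝ} (ht : t ∈ Ico (0 : ℝ) 1) :
    ∫ z in (0 : ℝ)..t, (exp β - 1) / (exp (β * (1 - z)) - 1)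
      = (1 - exp β) / β * log (expWeight β t) := by
  have hIcc : uIcc 0 t = Icc 0 t := uIcc_of_le ht.1
  have hlt : ∀ z ∈ uIcc 0 t, z < 1 := fun z hz ↦ by rw [hIcc] at hz; exact hz.2.trans_lt ht.2
  have hcont : ContinuousOn (fun z ↦ (exp β - 1) / (exp (β * (1 - z)) - 1)) (uIcc 0 t) := by
    refine continuousOn_const.div (by fun_prop) fun z hz ↦ ?_
    exact exp_sub_one_ne_zero (mul_ne_zero hβ (by linarith [hlt z hz]))
  rw [intervalIntegral.integral_eq_sub_of_hasDerivAt
      (fun z hz ↦ hasDerivAt_log_expWeight hβ (hlt z hz)) hcont.intervalIntegrable,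
    expWeight_zero hβ, log_one, mul_zero, sub_zero]

lemma exp_mul_eq_of_expWeight_eq_mul (hβ : β ≠ 0) {v x y : ℝ}
    (h : expWeight β v = expWeight β x * expWeight β y) :
    exp (β * v) = (exp (β * (x + 1)) + exp (β * (y + 1)) - exp (β * (x + y)) - exp β)
      / (exp β - 1) := by
  have hE : exp β - 1 ≠ 0 := exp_sub_one_ne_zero hβ
  simp only [expWeight] at h
  field_simp at h
  rw [eq_div_iff hE]
  simp only [mul_add, mul_one, exp_add]
  linear_combination -h

end expWeight

theorem stmt_8 (β : ℝ) (hβ : β ≠ 0)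
    (g : ℝ → ℝ) (hg : ∀ x, g x = (Real.exp (β * (1 - x)) - 1) / (Real.exp β - 1))
    (u : ℝ → ℝ) (hu : ∀ x ∈ Ico (0:ℝ) 1, u x = ∫ z in (0:ℝ)..x, 1 / g z)
    (V : ℝ → ℝ → ℝ)
    (hV : ∀ x ∈ Ico (0:ℝ) 1, ∀ y ∈ Ico (0:ℝ) 1,
      V x y ∈ Ico (0:ℝ) 1 ∧ u (V x y) = u x + u y) :
    ∀ x ∈ Ico (0:ℝ) 1, ∀ y ∈ Ico (0:ℝ) 1,
      V x y = (1 / β) * Real.log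
        ((Real.exp (β * (x + 1)) + Real.exp (β * (y + 1))
          - Real.exp (β * (x + y)) - Real.exp β) / (Real.exp β - 1)) := by
  intro x hx y hy
  obtain ⟨hv, huv⟩ := hV x hx y hy
  have hu_eq : ∀ t ∈ Ico (0 : ℝ) 1, u t = (1 - exp β) / β * log (expWeight β t) := by
    intro t ht
    simp only [hu t ht, hg, one_div_div]
    exact integral_inv_eq_log_expWeight hβ ht
  have hc : (1 - exp β) / β ≠ 0 :=
    div_ne_zero (by rw [← neg_sub]; exact neg_ne_zero.mpr (exp_sub_one_ne_zero hβ)) hβ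
  have hw : expWeight β (V x y) = expWeight β x * expWeight β y := by
    have hx₀ := expWeight_pos hβ hx.2
    have hy₀ := expWeight_pos hβ hy.2
    refine log_injOn_pos (expWeight_pos hβ hv.2) (mul_pos hx₀ hy₀) ?_
    rw [log_mul hx₀.ne' hy₀.ne']
    refine mul_left_cancel₀ hc ?_
    rw [mul_add, ← hu_eq _ hv, ← hu_eq _ hx, ← hu_eq _ hy, huv]
  rw [← exp_mul_eq_of_expWeight_eq_mul hβ hw, log_exp]
  field_simp
end

section
/- Let g be strictly decreasing, C¹ on [0,1] with g(0)=1, g(1)=0, and V defined by V(x,y) = u⁻¹(u(x)+u(y)). For any ε ∈ (0,1), all x ∈ [0, 1-ε] and all y ∈ [0,1), the absolute value of the x-derivative of g(V(x,y))/g(x) is at most 2·‖g'‖_∞ / (g(1-ε))², where ‖g'‖_∞ = max_{0≤z≤1} |g'(z)|. -/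
/-!
Write `φ x = V x y`. Differentiating `u (φ x) = u x + u y` gives `φ' / g(φ) = 1 / g(x)`, i.e.
`φ' = g(φ) / g(x)`. Hence
`∂ₓ (g(φ) / g(x)) = (g'(φ) φ' g(x) - g(φ) g'(x)) / g(x)² = g(φ) (g'(φ) - g'(x)) / g(x)²`,
and `0 < g(φ) ≤ 1`, `|g'| ≤ M`, `g(x) ≥ g(1 - ε)` on `[0, 1 - ε]` give the bound.
For `y = 0` the quotient is identically `1`.
-/

open Set Filter Topology

section Primitive

variable {f u : ℝ → ℝ} {a b : ℝ}

theorem hasDerivWithinAt_Ico_of_eq_intervalIntegral (hf : ContinuousOn f (Ico a b))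
    (hu : ∀ x ∈ Ico a b, u x = ∫ t in a..x, f t) {z : ℝ} (hz : z ∈ Ico a b) :
    HasDerivWithinAt u (f z) (Ico a b) z := by
  have : Fact (z ∈ Icc a b) := ⟨Ico_subset_Icc_self hz⟩
  have hIco : Ico a b ∈ 𝓝[Icc a b] z :=
    mem_of_superset (inter_mem_nhdsWithin _ (Iio_mem_nhds hz.2)) fun w hw => ⟨hw.1.1, hw.2⟩
  have hFTC : HasDerivWithinAt (fun x => ∫ t in a..x, f t) (f z) (Icc a b) z :=
    intervalIntegral.integral_hasDerivWithinAt_right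
      ((hf.mono (Icc_subset_Ico_right hz.2)).intervalIntegrable_of_Icc hz.1)
      ⟨Ico a b, hIco, hf.aestronglyMeasurable measurableSet_Ico⟩
      ((hf z hz).mono_of_mem_nhdsWithin hIco)
  exact (hFTC.mono Ico_subset_Icc_self).congr hu (hu z hz)

theorem hasStrictDerivAt_of_eq_intervalIntegral (hf : ContinuousOn f (Ico a b))
    (hu : ∀ x ∈ Ico a b, u x = ∫ t in a..x, f t) {z : ℝ} (hz : z ∈ Ioo a b) :
    HasStrictDerivAt u (f z) z :=
  hasStrictDerivAt_of_hasDerivAt_of_continuousAt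
    (eventually_of_mem (Ioo_mem_nhds hz.1 hz.2) fun _ hw =>
      (hasDerivWithinAt_Ico_of_eq_intervalIntegral hf hu (Ioo_subset_Ico_self hw)).hasDerivAt
        (Ico_mem_nhds hw.1 hw.2))
    (hf.continuousAt (Ico_mem_nhds hz.1 hz.2))

theorem strictMonoOn_of_eq_intervalIntegral (hf : ContinuousOn f (Ico a b))
    (hu : ∀ x ∈ Ico a b, u x = ∫ t in a..x, f t) (hpos : ∀ z ∈ Ioo a b, 0 < f z) :
    StrictMonoOn u (Ico a b) := by
  have hderiv z (hz : z ∈ Ico a b) := hasDerivWithinAt_Ico_of_eq_intervalIntegral hf hu hz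
  refine strictMonoOn_of_hasDerivWithinAt_pos (f' := f) (convex_Ico a b)
    (fun z hz => (hderiv z hz).continuousWithinAt) ?_ ?_ <;> rw [interior_Ico]
  · exact fun z hz => (hderiv z (Ioo_subset_Ico_self hz)).mono Ioo_subset_Ico_self
  · exact hpos

end Primitive

theorem hasDerivWithinAt_of_comp_eq {u φ F : ℝ → ℝ} {s : Set ℝ} {x u' F' : ℝ}
    (hu : HasStrictDerivAt u u' (φ x)) (hu' : u' ≠ 0) (hinj : InjOn u s) (hφ : MapsTo φ s s)
    (hs : s ∈ 𝓝 (φ x)) (hx : x ∈ s) (hF : HasDerivWithinAt F F' s x)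
    (hcomp : ∀ y ∈ s, u (φ y) = F y) : HasDerivWithinAt φ (u'⁻¹ * F') s x := by
  have hleft := (hu.eventually_left_inverse hu').self_of_nhds
  have hright := hu.eventually_right_inverse hu'
  have hderiv := (hu.to_localInverse hu').hasDerivAt
  generalize hu.localInverse u u' (φ x) hu' = L at hleft hright hderiv
  have hnear : ∀ᶠ t in 𝓝 (u (φ x)), u (L t) = t ∧ L t ∈ s :=
    hright.and (hderiv.continuousAt.preimage_mem_nhds (by rwa [hleft]))
  rw [hcomp x hx] at hleft hnear hderiv
  refine (hderiv.comp_hasDerivWithinAt x hF).congr_of_eventuallyEq ?_ hleft.symm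
  filter_upwards [self_mem_nhdsWithin, hF.continuousWithinAt.tendsto hnear] with y hy ⟨hLu, hLs⟩
  exact hinj (hφ hy) hLs (by rw [hcomp y hy, Function.comp_apply, hLu])

theorem hasDerivWithinAt_of_comp_eq_add_const {f u φ : ℝ → ℝ} {a b c x : ℝ}
    (hf : ContinuousOn f (Ico a b)) (hu : ∀ x ∈ Ico a b, u x = ∫ t in a..x, f t)
    (hinj : InjOn u (Ico a b)) (hφ : ∀ x ∈ Ico a b, φ x ∈ Ico a b ∧ u (φ x) = u x + c)
    (hx : x ∈ Ico a b) (hφx : φ x ∈ Ioo a b) (hfφx : f (φ x) ≠ 0) :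
    HasDerivWithinAt φ ((f (φ x))⁻¹ * f x) (Ico a b) x :=
  hasDerivWithinAt_of_comp_eq (hasStrictDerivAt_of_eq_intervalIntegral hf hu hφx) hfφx hinj
    (fun x' hx' => (hφ x' hx').1) (Ico_mem_nhds hφx.1 hφx.2) hx
    ((hasDerivWithinAt_Ico_of_eq_intervalIntegral hf hu hx).add_const c) fun x' hx' => (hφ x' hx').2

theorem abs_derivWithin_Icc_le {f : ℝ → ℝ} {a b M : ℝ} (hab : a < b)
    (hf : ContDiffOn ℝ 1 f (Icc a b)) (hM : ∀ z ∈ Ioo a b, |deriv f z| ≤ M) {z : ℝ}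
    (hz : z ∈ Icc a b) : |derivWithin f (Icc a b) z| ≤ M := by
  have hcont : ContinuousOn (fun z => |derivWithin f (Icc a b) z|) (Icc a b) :=
    (hf.continuousOn_derivWithin (uniqueDiffOn_Icc hab) le_rfl).abs
  rw [← closure_Ioo hab.ne] at hz
  refine le_on_closure (fun w hw => ?_) (hcont.mono (closure_Ioo hab.ne).subset)
    continuousOn_const hz
  rw [derivWithin_of_mem_nhds (Icc_mem_nhds hw.1 hw.2)]
  exact hM w hw

theorem hasDerivWithinAt_comp_div {g φ : ℝ → ℝ} {s : Set ℝ} {x d₁ d₂ : ℝ}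
    (hg₁ : HasDerivAt g d₁ (φ x)) (hg₂ : HasDerivWithinAt g d₂ s x)
    (hφ : HasDerivWithinAt φ (g (φ x) / g x) s x) (hgx : g x ≠ 0) :
    HasDerivWithinAt (fun y => g (φ y) / g y) (g (φ x) * (d₁ - d₂) / g x ^ 2) s x := by
  refine ((hg₁.comp_hasDerivWithinAt x hφ).div hg₂ hgx).congr_deriv ?_
  rw [Function.comp_apply]
  field_simp

theorem abs_mul_sub_div_sq_le {c d₁ d₂ e m M : ℝ} (hc : |c| ≤ 1) (h₁ : |d₁| ≤ M)
    (h₂ : |d₂| ≤ M) (hm : 0 < m) (hme : m ≤ e) : |c * (d₁ - d₂) / e ^ 2| ≤ 2 * M / m ^ 2 := by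
  rw [abs_div, abs_mul, abs_pow]
  have hnum : |c| * |d₁ - d₂| ≤ 2 * M :=
    calc |c| * |d₁ - d₂| ≤ 1 * (|d₁| + |d₂|) :=
          mul_le_mul hc (abs_sub _ _) (abs_nonneg _) zero_le_one
      _ ≤ 2 * M := by linarith
  exact div_le_div₀ (by linarith [abs_nonneg d₁]) hnum (by positivity)
    (pow_le_pow_left₀ hm.le (hme.trans (le_abs_self e)) 2)

theorem abs_derivWithin_comp_div_le {g φ : ℝ → ℝ} {a b x m M : ℝ} (hab : a < b)
    (hg : ContDiffOn ℝ 1 g (Icc a b)) (hM : ∀ z ∈ Ioo a b, |deriv g z| ≤ M)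
    (hx : x ∈ Ico a b) (hφx : φ x ∈ Ioo a b)
    (hφ : HasDerivWithinAt φ (g (φ x) / g x) (Ico a b) x) (hgφx : |g (φ x)| ≤ 1)
    (hm : 0 < m) (hmx : m ≤ g x) :
    |derivWithin (fun y => g (φ y) / g y) (Ico a b) x| ≤ 2 * M / m ^ 2 := by
  have hg' : ∀ z ∈ Icc a b, HasDerivWithinAt g (derivWithin g (Icc a b) z) (Icc a b) z :=
    fun z hz => ((hg.differentiableOn one_ne_zero) z hz).hasDerivWithinAt
  have hM' : ∀ z ∈ Icc a b, |derivWithin g (Icc a b) z| ≤ M := fun z =>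
    abs_derivWithin_Icc_le hab hg hM
  rw [(hasDerivWithinAt_comp_div
    ((hg' _ (Ioo_subset_Icc_self hφx)).hasDerivAt (Icc_mem_nhds hφx.1 hφx.2))
    ((hg' x (Ico_subset_Icc_self hx)).mono Ico_subset_Icc_self) hφ
    (hm.trans_le hmx).ne').derivWithin (uniqueDiffOn_Ico a b x hx)]
  exact abs_mul_sub_div_sq_le hgφx (hM' _ (Ioo_subset_Icc_self hφx))
    (hM' x (Ico_subset_Icc_self hx)) hm hmx

theorem stmt_12 (g : ℝ → ℝ)
    (hanti : StrictAntiOn g (Icc 0 1)) (hC1 : ContDiffOn ℝ 1 g (Icc 0 1))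
    (hg0 : g 0 = 1) (hg1 : g 1 = 0)
    (u : ℝ → ℝ) (hu : ∀ x ∈ Ico (0:ℝ) 1, u x = ∫ z in (0:ℝ)..x, 1 / g z)
    (V : ℝ → ℝ → ℝ)
    (hV : ∀ x ∈ Ico (0:ℝ) 1, ∀ y ∈ Ico (0:ℝ) 1,
      V x y ∈ Ico (0:ℝ) 1 ∧ u (V x y) = u x + u y)
    (M : ℝ) (hM : IsGreatest ((fun z => |deriv g z|) '' Icc (0:ℝ) 1) M)
    (ε : ℝ) (hε : ε ∈ Ioo (0:ℝ) 1) :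
    ∀ x ∈ Icc (0:ℝ) (1 - ε), ∀ y ∈ Ico (0:ℝ) 1,
      |derivWithin (fun x' => g (V x' y) / g x') (Ico (0:ℝ) 1) x|
        ≤ 2 * M / (g (1 - ε)) ^ 2 := by
  intro x hx y hy
  have h0 : (0:ℝ) ∈ Ico (0:ℝ) 1 := ⟨le_rfl, one_pos⟩
  have hxI : x ∈ Ico (0:ℝ) 1 := ⟨hx.1, hx.2.trans_lt (by linarith [hε.1])⟩
  have hgpos : ∀ z ∈ Ico (0:ℝ) 1, 0 < g z := fun z hz =>
    hg1 ▸ hanti (Ico_subset_Icc_self hz) (right_mem_Icc.2 zero_le_one) hz.2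
  have hinv : ContinuousOn (fun z => 1 / g z) (Ico 0 1) :=
    continuousOn_const.div (hC1.continuousOn.mono Ico_subset_Icc_self)
      fun z hz => (hgpos z hz).ne'
  have hmono : StrictMonoOn u (Ico 0 1) := strictMonoOn_of_eq_intervalIntegral hinv hu
    fun z hz => one_div_pos.2 (hgpos z (Ioo_subset_Ico_self hz))
  have hu0 : u 0 = 0 := by rw [hu 0 h0, intervalIntegral.integral_same]
  rcases hy.1.eq_or_lt with rfl | hy0
  · have hconst : EqOn (fun x' => g (V x' 0) / g x') (fun _ => 1) (Ico 0 1) := fun x' hx' => by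
      have hVx : V x' 0 = x' := hmono.injOn (hV x' hx' 0 hy).1 hx'
        (by rw [(hV x' hx' 0 hy).2, hu0, add_zero])
      simp only [hVx]
      exact div_self (hgpos x' hx').ne'
    rw [derivWithin_congr hconst (hconst hxI), derivWithin_fun_const, Pi.zero_apply, abs_zero]
    obtain ⟨z, -, rfl⟩ := hM.1
    positivity
  obtain ⟨hp, hup⟩ := hV x hxI y hy
  have hp0 : 0 < V x y :=
    hx.1.trans_lt ((hmono.lt_iff_lt hxI hp).1 (by linarith [hmono h0 hy hy0]))
  have hφ : HasDerivWithinAt (fun x' => V x' y) (g (V x y) / g x) (Ico 0 1) x := by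
    have := hasDerivWithinAt_of_comp_eq_add_const (φ := fun x' => V x' y) hinv hu hmono.injOn
      (fun x' hx' => hV x' hx' y hy) hxI ⟨hp0, hp.2⟩ (one_div_pos.2 (hgpos _ hp)).ne'
    rwa [one_div, inv_inv, ← div_eq_mul_one_div] at this
  have h1ε : 1 - ε ∈ Ico (0:ℝ) 1 := ⟨by linarith [hε.2], by linarith [hε.1]⟩
  refine abs_derivWithin_comp_div_le one_pos hC1
    (fun z hz => hM.2 ⟨z, Ioo_subset_Icc_self hz, rfl⟩) hxI ⟨hp0, hp.2⟩ hφ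
    (abs_le.2 ⟨by linarith [hgpos _ hp], hg0 ▸ ?_⟩) (hgpos _ h1ε)
    (hanti.antitoneOn (Ico_subset_Icc_self hxI) (Ico_subset_Icc_self h1ε) hx.2)
  exact hanti.antitoneOn (left_mem_Icc.2 zero_le_one) (Ico_subset_Icc_self hp) hp.1
end

section
/- Let ψ_α, ψ : [0,1) → ℝ with ψ(s) > 0 for all s, and suppose γ(α) → ∞, the ψ_α are uniformly equicontinuous on compact subintervals of [0,1), and ψ_α → ψ uniformly on compact subintervals of [0,1). Define g_α(s) = exp(−γ(α)·∫₀ˢ ψ_α(u) du). Then for every ε ∈ (0,1) and T > 0, sup over x ∈ [ε, 1−ε] and y ∈ [−T, T] of |g_α(x)·e^{−ψ(x)·y} / g_α(x + y/γ(α)) − 1| tends to 0 as α → ∞. -/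
open Set Filter MeasureTheory

/-
Write h = y / γ(α). Then g_α(x) e^{-ψ(x) y} / g_α(x + h) = exp(γ(α) ∫ₓ^{x+h} (ψ_α(u) - ψ(x)) du).
On a compact [0, b] ⊂ [0, 1), equicontinuity and uniform convergence make ψ_α(u) - ψ(x) uniformly
small once |u - x| ≤ |h| ≤ T / γ(α) is small, so the exponent is at most |y| times something small.
-/

theorem exp_neg_mul_integral_ratio {f : ℝ → ℝ} {c a x y : ℝ} (hc : c ≠ 0)
    (h₀ : IntervalIntegrable f volume 0 x) (h₁ : IntervalIntegrable f volume x (x + y / c)) :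
    Real.exp (-c * ∫ t in (0:ℝ)..x, f t) * Real.exp (-a * y) /
        Real.exp (-c * ∫ t in (0:ℝ)..x + y / c, f t) =
      Real.exp (c * ∫ u in x..x + y / c, (f u - a)) := by
  rw [← Real.exp_add, ← Real.exp_sub, ← intervalIntegral.integral_add_adjacent_intervals h₀ h₁,
    intervalIntegral.integral_sub h₁ intervalIntegrable_const, intervalIntegral.integral_const,
    smul_eq_mul]
  congr 1
  field_simp
  ring

theorem abs_mul_integral_sub_le {f : ℝ → ℝ} {c a x y η : ℝ} (hc : 0 < c)
    (hf : ∀ u ∈ uIoc x (x + y / c), |f u - a| ≤ η) :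
    |c * ∫ u in x..x + y / c, (f u - a)| ≤ η * |y| := by
  have h := intervalIntegral.norm_integral_le_of_norm_le_const (f := fun u ↦ f u - a) hf
  rw [Real.norm_eq_abs, add_sub_cancel_left, abs_div, abs_of_pos hc] at h
  rw [abs_mul, abs_of_pos hc]
  calc c * |∫ u in x..x + y / c, (f u - a)| ≤ c * (η * (|y| / c)) := by gcongr
    _ = η * |y| := by field_simp

theorem exists_pos_eventually_abs_sub_lt {ι : Type*} {l : Filter ι} {F : ι → ℝ → ℝ}
    {f : ℝ → ℝ} {s : Set ℝ}
    (hequi : ∀ ε > 0, ∃ δ > 0, ∀ᶠ i in l, ∀ x ∈ s, ∀ y ∈ s, |x - y| < δ → |F i x - F i y| < ε)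
    (hconv : TendstoUniformlyOn F f l s) {η : ℝ} (hη : 0 < η) :
    ∃ δ > 0, ∀ᶠ i in l, ∀ x ∈ s, ∀ u ∈ s, |u - x| < δ → |F i u - f x| < η := by
  obtain ⟨δ, hδ, hF⟩ := hequi (η / 2) (half_pos hη)
  refine ⟨δ, hδ, ?_⟩
  filter_upwards [hF, Metric.tendstoUniformlyOn_iff.mp hconv (η / 2) (half_pos hη)]
    with i hequi_i hconv_i x hx u hu hux
  have h₁ := hequi_i u hu x hx hux
  have h₂ : |F i x - f x| < η / 2 := by rw [abs_sub_comm, ← Real.dist_eq]; exact hconv_i x hx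
  calc |F i u - f x| = |(F i u - F i x) + (F i x - f x)| := by rw [sub_add_sub_cancel]
    _ ≤ |F i u - F i x| + |F i x - f x| := abs_add_le _ _
    _ < η := by linarith

theorem stmt_17_general
    (γ : ℝ → ℝ) (hγ : Tendsto γ atTop atTop)
    (ψα : ℝ → ℝ → ℝ) (ψ : ℝ → ℝ)
    (hcont : ∀ α, ContinuousOn (ψα α) (Ico (0:ℝ) 1))
    (hequi : ∀ b ∈ Ico (0:ℝ) 1, ∀ ε > (0:ℝ), ∃ δ > (0:ℝ), ∀ α ≥ (1:ℝ),
      ∀ x ∈ Icc (0:ℝ) b, ∀ y ∈ Icc (0:ℝ) b, |x - y| < δ → |ψα α x - ψα α y| < ε)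
    (hconv : ∀ b ∈ Ico (0:ℝ) 1,
      TendstoUniformlyOn ψα ψ atTop (Icc (0:ℝ) b))
    (gα : ℝ → ℝ → ℝ)
    (hgα : ∀ α s, gα α s = Real.exp (-(γ α) * ∫ t in (0:ℝ)..s, ψα α t)) :
    ∀ ε ∈ Ioo (0:ℝ) 1, ∀ T > (0:ℝ), ∀ δ > (0:ℝ), ∃ A : ℝ, ∀ α ≥ A,
      ∀ x ∈ Icc ε (1 - ε), ∀ y ∈ Icc (-T) T,
        |gα α x * Real.exp (-(ψ x) * y) / gα α (x + y / γ α) - 1| < δ := by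
  intro ε ⟨hε0, hε1⟩ T hT δ hδ
  have hb : 1 - ε / 2 ∈ Ico (0:ℝ) 1 := ⟨by linarith, by linarith⟩
  set K := Icc (0:ℝ) (1 - ε / 2)
  set η := min 1 (δ / 3) / T with hη
  have hTη : T * η = min 1 (δ / 3) := by rw [hη]; field_simp
  obtain ⟨δ₁, hδ₁, hclose⟩ := exists_pos_eventually_abs_sub_lt
    (fun ε' hε' ↦ (hequi _ hb ε' hε').imp fun _ ⟨hδ, h⟩ ↦ ⟨hδ, (eventually_ge_atTop 1).mono h⟩)
    (hconv _ hb) (show 0 < η by positivity)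
  obtain ⟨A, hA⟩ := eventually_atTop.mp
    (hclose.and (hγ.eventually_gt_atTop (max (2 * T / ε) (T / δ₁))))
  refine ⟨A, fun α hα x hx y hy ↦ ?_⟩
  obtain ⟨hψ, hγα⟩ := hA α hα
  have hγ0 : 0 < γ α := lt_of_le_of_lt (by positivity) hγα
  have hstep : |y / γ α| < ε / 2 ∧ |y / γ α| < δ₁ := by
    rw [abs_div, abs_of_pos hγ0, div_lt_iff₀ hγ0, div_lt_iff₀ hγ0]
    rw [max_lt_iff, div_lt_iff₀ hε0, div_lt_iff₀ hδ₁] at hγα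
    constructor <;> nlinarith [abs_le.mpr hy]
  have hxK : x ∈ K := ⟨by linarith [hx.1], by linarith [hx.2]⟩
  have hx'K : x + y / γ α ∈ K := by
    obtain ⟨h₁, h₂⟩ := abs_lt.mp hstep.1
    exact ⟨by linarith [hx.1], by linarith [hx.2]⟩
  have hint : ∀ c ∈ K, ∀ d ∈ K, IntervalIntegrable (ψα α) volume c d := fun c hc d hd ↦
    ((hcont α).mono ((uIcc_subset_Icc hc hd).trans (Icc_subset_Ico_right hb.2))).intervalIntegrable
  rw [hgα, hgα, exp_neg_mul_integral_ratio hγ0.ne' (hint 0 ⟨le_rfl, hb.1⟩ x hxK) (hint x hxK _ hx'K)]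
  have hE : |γ α * ∫ u in x..x + y / γ α, (ψα α u - ψ x)| ≤ min 1 (δ / 3) := by
    refine (abs_mul_integral_sub_le (η := η) hγ0 fun u hu ↦ ?_).trans ?_
    · have hu' := uIoc_subset_uIcc hu
      refine (hψ x hxK u (uIcc_subset_Icc hxK hx'K hu') ?_).le
      exact (abs_sub_left_of_mem_uIcc hu').trans_lt (by simpa using hstep.2)
    · rw [← hTη, mul_comm T]
      exact mul_le_mul_of_nonneg_left (abs_le.mpr hy) (by positivity)
  have := Real.abs_exp_sub_one_le (hE.trans (min_le_left _ _))
  linarith [min_le_right 1 (δ / 3)]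

theorem stmt_17
    (γ : ℝ → ℝ) (hγpos : ∀ α ≥ (1:ℝ), 0 < γ α) (hγ : Tendsto γ atTop atTop)
    (ψα : ℝ → ℝ → ℝ) (ψ : ℝ → ℝ)
    (hcont : ∀ α, ContinuousOn (ψα α) (Ico (0:ℝ) 1))
    (hψcont : ContinuousOn ψ (Ico (0:ℝ) 1))
    (hequi : ∀ b ∈ Ico (0:ℝ) 1, ∀ ε > (0:ℝ), ∃ δ > (0:ℝ), ∀ α ≥ (1:ℝ),
      ∀ x ∈ Icc (0:ℝ) b, ∀ y ∈ Icc (0:ℝ) b, |x - y| < δ → |ψα α x - ψα α y| < ε)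
    (hconv : ∀ b ∈ Ico (0:ℝ) 1,
      TendstoUniformlyOn ψα ψ atTop (Icc (0:ℝ) b))
    (hψpos : ∀ s ∈ Ico (0:ℝ) 1, 0 < ψ s)
    (gα : ℝ → ℝ → ℝ)
    (hgα : ∀ α s, gα α s = Real.exp (-(γ α) * ∫ t in (0:ℝ)..s, ψα α t)) :
    ∀ ε ∈ Ioo (0:ℝ) 1, ∀ T > (0:ℝ), ∀ δ > (0:ℝ), ∃ A : ℝ, ∀ α ≥ A,
      ∀ x ∈ Icc ε (1 - ε), ∀ y ∈ Icc (-T) T,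
        |gα α x * Real.exp (-(ψ x) * y) / gα α (x + y / γ α) - 1| < δ :=
  stmt_17_general γ hγ ψα ψ hcont hequi hconv gα hgα
end

section
/- Under the same assumptions, with u_α(x) := ∫₀ˣ 1/g_α(z) dz, for every ε ∈ (0,1) the supremum over x ∈ [ε, 1−ε] of |u_α(x)·γ(α)·g_α(x) − 1/ψ(x)| tends to 0 as α → ∞. -/
/-!
After multiplying out, `uα α x * γ α * gα α x = γ ∫₀ˣ exp (-γ ∫_z^x ψα)`, a Laplace-type integral
concentrated at `z = x`. Uniform convergence together with uniform continuity of `ψ` on `[0, 1 - ε]`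
makes `ψα` lie within `η` of `ψ x` on a window `[x - ρ, x]`; there the integrand is squeezed
between `exp (-γ (ψ x ± η) (x - z))`, whose integrals are `1 / (γ (ψ x ± η))` up to exponentially
small terms.
Off the window, `ψα ≥ m` keeps the integrand below `exp (-γ m ρ)`, and `γ exp (-γ m ρ) → 0`.
-/

open Set Filter Real Topology MeasureTheory

lemma integral_exp_neg_mul_sub {k : ℝ} (hk : k ≠ 0) (x : ℝ) :
    ∫ z in (0:ℝ)..x, exp (-(k * (x - z))) = (1 - exp (-(k * x))) / k := by
  have h : ∀ z, -(k * (x - z)) = k * z - k * x := fun z => by ring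
  simp_rw [h]
  rw [intervalIntegral.integral_comp_mul_sub (f := exp) hk, integral_exp]
  simp only [mul_zero, zero_sub, sub_self, exp_zero, smul_eq_mul]
  field_simp

lemma mul_integral_exp_neg_le {F : ℝ → ℝ} {γ x ρ m k : ℝ} (hγ : 0 < γ) (hm : 0 ≤ m) (hk : 0 < k)
    (hx : 0 ≤ x) (hF : ContinuousOn F (Icc 0 x))
    (hFm : ∀ z ∈ Icc 0 x, m * (x - z) ≤ F z) (hFk : ∀ z ∈ Icc (x - ρ) x, k * (x - z) ≤ F z) :
    γ * ∫ z in (0:ℝ)..x, exp (-(γ * F z)) ≤ 1 / k + γ * x * exp (-(γ * (m * ρ))) := by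
  set K := exp (-(γ * (m * ρ)))
  have hpt : ∀ z ∈ Icc 0 x, exp (-(γ * F z)) ≤ exp (-(γ * k * (x - z))) + K := by
    intro z hz
    rcases le_total (x - ρ) z with hzρ | hzρ
    · have hFz := hFk z ⟨hzρ, hz.2⟩
      have : exp (-(γ * F z)) ≤ exp (-(γ * k * (x - z))) := exp_le_exp.mpr (by nlinarith)
      linarith [exp_pos (-(γ * (m * ρ)))]
    · have hFz := hFm z hz
      have : exp (-(γ * F z)) ≤ K :=
        exp_le_exp.mpr (by nlinarith [mul_le_mul_of_nonneg_left (by linarith : ρ ≤ x - z) hm])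
      linarith [exp_pos (-(γ * k * (x - z)))]
  have hexp : Continuous fun z => exp (-(γ * k * (x - z))) := by fun_prop
  have hint : ∫ z in (0:ℝ)..x, exp (-(γ * F z)) ≤ ∫ z in (0:ℝ)..x, (exp (-(γ * k * (x - z))) + K) :=
    intervalIntegral.integral_mono_on hx
      ((by fun_prop : ContinuousOn (fun z => exp (-(γ * F z))) (Icc 0 x)).intervalIntegrable_of_Icc
        hx)
      ((hexp.add continuous_const).intervalIntegrable _ _) hpt
  rw [intervalIntegral.integral_add (hexp.intervalIntegrable _ _) intervalIntegrable_const,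
    intervalIntegral.integral_const, integral_exp_neg_mul_sub (by positivity), smul_eq_mul,
    sub_zero] at hint
  calc γ * ∫ z in (0:ℝ)..x, exp (-(γ * F z))
      ≤ γ * ((1 - exp (-(γ * k * x))) / (γ * k) + x * K) := by gcongr
    _ = (1 - exp (-(γ * k * x))) / k + γ * x * K := by field_simp
    _ ≤ 1 / k + γ * x * K := by gcongr; linarith [exp_pos (-(γ * k * x))]

lemma le_mul_integral_exp_neg {F : ℝ → ℝ} {γ x ρ m k : ℝ} (hγ : 0 < γ) (hm : 0 < m) (hmk : m ≤ k)
    (hρ : 0 ≤ ρ) (hρx : ρ ≤ x) (hF : ContinuousOn F (Icc 0 x))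
    (hFk : ∀ z ∈ Icc (x - ρ) x, F z ≤ k * (x - z)) :
    1 / k - (γ * x + 1 / m) * exp (-(γ * (m * ρ))) ≤ γ * ∫ z in (0:ℝ)..x, exp (-(γ * F z)) := by
  set K := exp (-(γ * (m * ρ)))
  have hx : 0 ≤ x := hρ.trans hρx
  have hk : 0 < k := hm.trans_le hmk
  have hfar : ∀ {d}, ρ ≤ d → exp (-(γ * k * d)) ≤ K := fun hd =>
    exp_le_exp.mpr (by nlinarith [mul_le_mul hmk hd hρ hk.le])
  have hpt : ∀ z ∈ Icc 0 x, exp (-(γ * k * (x - z))) - K ≤ exp (-(γ * F z)) := by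
    intro z hz
    rcases le_total (x - ρ) z with hzρ | hzρ
    · have hFz := hFk z ⟨hzρ, hz.2⟩
      have : exp (-(γ * k * (x - z))) ≤ exp (-(γ * F z)) := exp_le_exp.mpr (by nlinarith)
      linarith [exp_pos (-(γ * (m * ρ)))]
    · linarith [hfar (by linarith : ρ ≤ x - z), exp_pos (-(γ * F z))]
  have hexp : Continuous fun z => exp (-(γ * k * (x - z))) := by fun_prop
  have hint : ∫ z in (0:ℝ)..x, (exp (-(γ * k * (x - z))) - K) ≤ ∫ z in (0:ℝ)..x, exp (-(γ * F z)) :=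
    intervalIntegral.integral_mono_on hx ((hexp.sub continuous_const).intervalIntegrable _ _)
      ((by fun_prop : ContinuousOn (fun z => exp (-(γ * F z))) (Icc 0 x)).intervalIntegrable_of_Icc
        hx)
      hpt
  rw [intervalIntegral.integral_sub (hexp.intervalIntegrable _ _) intervalIntegrable_const,
    intervalIntegral.integral_const, integral_exp_neg_mul_sub (by positivity), smul_eq_mul,
    sub_zero] at hint
  have htail : exp (-(γ * k * x)) / k ≤ K / m := div_le_div₀ (exp_pos _).le (hfar hρx) hm hmk
  calc 1 / k - (γ * x + 1 / m) * K
      ≤ (1 - exp (-(γ * k * x))) / k - γ * x * K := by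
        rw [sub_div]; linarith [show 1 / m * K = K / m by ring]
    _ = γ * ((1 - exp (-(γ * k * x))) / (γ * k) - x * K) := by field_simp
    _ ≤ γ * ∫ z in (0:ℝ)..x, exp (-(γ * F z)) := by gcongr

lemma one_div_sub_one_div_le {m c η : ℝ} (hm : 0 < m) (hη : 0 ≤ η) (hcη : m ≤ c - η) :
    1 / (c - η) - 1 / c ≤ η / m ^ 2 ∧ 1 / c - 1 / (c + η) ≤ η / m ^ 2 := by
  have hc : 0 < c := by linarith
  constructor
  · rw [div_sub_div _ _ (by linarith) hc.ne', div_le_div_iff₀ (by nlinarith) (by positivity)]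
    nlinarith [mul_le_mul hcη (by linarith : m ≤ c) hm.le (by linarith : 0 ≤ c - η)]
  · rw [div_sub_div _ _ hc.ne' (by linarith), div_le_div_iff₀ (by nlinarith) (by positivity)]
    nlinarith [mul_le_mul (by linarith : m ≤ c) (by linarith : m ≤ c + η) hm.le hc.le]

lemma mul_sub_le_integral_of_le {f : ℝ → ℝ} {a b c : ℝ} (hab : a ≤ b)
    (hf : IntervalIntegrable f volume a b) (h : ∀ u ∈ Icc a b, c ≤ f u) :
    c * (b - a) ≤ ∫ u in a..b, f u := by
  simpa [mul_comm] using intervalIntegral.integral_mono_on hab intervalIntegrable_const hf h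

lemma integral_le_mul_sub_of_le {f : ℝ → ℝ} {a b c : ℝ} (hab : a ≤ b)
    (hf : IntervalIntegrable f volume a b) (h : ∀ u ∈ Icc a b, f u ≤ c) :
    ∫ u in a..b, f u ≤ c * (b - a) := by
  simpa [mul_comm] using intervalIntegral.integral_mono_on hab hf intervalIntegrable_const h

theorem abs_mul_integral_exp_neg_integral_sub_one_div_le {f : ℝ → ℝ} {γ x ρ m c η : ℝ} (hγ : 0 < γ)
    (hm : 0 < m) (hρ : 0 ≤ ρ) (hρx : ρ ≤ x) (hf : IntervalIntegrable f volume 0 x)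
    (hfm : ∀ u ∈ Icc 0 x, m ≤ f u) (hfc : ∀ u ∈ Icc (x - ρ) x, |f u - c| ≤ η)
    (hcη : m ≤ c - η) :
    |(γ * ∫ z in (0:ℝ)..x, exp (-(γ * ∫ t in z..x, f t))) - 1 / c|
      ≤ η / m ^ 2 + (γ * x + 1 / m) * exp (-(γ * (m * ρ))) := by
  have hx : 0 ≤ x := hρ.trans hρx
  have hη : 0 ≤ η := (abs_nonneg _).trans (hfc x ⟨by linarith, le_rfl⟩)
  have hfz : ∀ z ∈ Icc 0 x, IntervalIntegrable f volume z x := fun z hz =>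
    hf.mono_set (uIcc_subset_uIcc_right (by rwa [uIcc_of_le hx]))
  have hF : ContinuousOn (fun z => ∫ t in z..x, f t) (Icc 0 x) := by
    simpa only [uIcc_of_le hx] using
      intervalIntegral.continuousOn_primitive_interval_left ((intervalIntegrable_iff').mp hf)
  have hFm : ∀ z ∈ Icc 0 x, m * (x - z) ≤ ∫ t in z..x, f t := fun z hz =>
    mul_sub_le_integral_of_le hz.2 (hfz z hz) fun u hu => hfm u ⟨hz.1.trans hu.1, hu.2⟩
  have hFc : ∀ z ∈ Icc (x - ρ) x,
      (c - η) * (x - z) ≤ ∫ t in z..x, f t ∧ ∫ t in z..x, f t ≤ (c + η) * (x - z) := by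
    intro z hz
    have hz0 : z ∈ Icc 0 x := ⟨by linarith [hz.1], hz.2⟩
    have hfc' : ∀ u ∈ Icc z x, c - η ≤ f u ∧ f u ≤ c + η := fun u hu => by
      have := abs_le.mp (hfc u ⟨hz.1.trans hu.1, hu.2⟩)
      constructor <;> linarith
    exact ⟨mul_sub_le_integral_of_le hz.2 (hfz z hz0) fun u hu => (hfc' u hu).1,
      integral_le_mul_sub_of_le hz.2 (hfz z hz0) fun u hu => (hfc' u hu).2⟩
  set K := exp (-(γ * (m * ρ)))
  have hup : γ * ∫ z in (0:ℝ)..x, exp (-(γ * ∫ t in z..x, f t)) ≤ 1 / (c - η) + γ * x * K :=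
    mul_integral_exp_neg_le hγ hm.le (by linarith) hx hF hFm fun z hz => (hFc z hz).1
  have hlow : 1 / (c + η) - (γ * x + 1 / m) * K ≤
      γ * ∫ z in (0:ℝ)..x, exp (-(γ * ∫ t in z..x, f t)) :=
    le_mul_integral_exp_neg hγ hm (by linarith) hρ hρx hF fun z hz => (hFc z hz).2
  obtain ⟨hgap₁, hgap₂⟩ := one_div_sub_one_div_le hm hη hcη
  have hK : 0 ≤ 1 / m * K := by positivity
  rw [abs_le]
  rw [add_mul] at hlow ⊢
  constructor <;> linarith

theorem abs_mul_integral_exp_neg_integral_sub_one_div_le_of_dist_lt {f ψ : ℝ → ℝ} {γ b x ρ m η : ℝ}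
    (hγ : 0 < γ) (hm : 0 < m) (hηm : η ≤ m) (hρ : 0 ≤ ρ) (hρx : ρ ≤ x) (hxb : x ≤ b)
    (hf : ContinuousOn f (Icc 0 b)) (hψ : ∀ s ∈ Icc 0 b, 2 * m ≤ ψ s)
    (hfψ : ∀ u ∈ Icc 0 b, ∀ y ∈ Icc 0 b, dist u y ≤ ρ → dist (f u) (ψ y) < η) :
    |(γ * ∫ z in (0:ℝ)..x, exp (-(γ * ∫ t in z..x, f t))) - 1 / ψ x|
      ≤ η / m ^ 2 + (γ * x + 1 / m) * exp (-(γ * (m * ρ))) := by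
  have hx0 : 0 ≤ x := hρ.trans hρx
  have hsub : Icc 0 x ⊆ Icc 0 b := Icc_subset_Icc_right hxb
  have hx : x ∈ Icc 0 b := ⟨hx0, hxb⟩
  refine abs_mul_integral_exp_neg_integral_sub_one_div_le hγ hm hρ hρx
    ((hf.mono hsub).intervalIntegrable_of_Icc hx0) (fun u hu => ?_) (fun u hu => ?_)
    (by linarith [hψ x hx])
  · have := abs_lt.mp (hfψ u (hsub hu) u (hsub hu) (by simpa using hρ))
    linarith [hψ u (hsub hu)]
  · refine (hfψ u (hsub ⟨by linarith [hu.1], hu.2⟩) x hx ?_).le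
    rw [Real.dist_eq, abs_sub_comm, abs_of_nonneg (by linarith [hu.2])]
    linarith [hu.1]

lemma integral_inv_exp_mul_exp {f : ℝ → ℝ} {x : ℝ} (γ : ℝ) (hf : IntervalIntegrable f volume 0 x) :
    (∫ z in (0:ℝ)..x, (exp (-γ * ∫ t in (0:ℝ)..z, f t))⁻¹) * exp (-γ * ∫ t in (0:ℝ)..x, f t)
      = ∫ z in (0:ℝ)..x, exp (-(γ * ∫ t in z..x, f t)) := by
  rw [← intervalIntegral.integral_mul_const]
  refine intervalIntegral.integral_congr fun z hz => ?_
  have hfz : IntervalIntegrable f volume 0 z := hf.mono_set (uIcc_subset_uIcc_left hz)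
  simp only [← exp_neg, ← exp_add, ← intervalIntegral.integral_interval_sub_left hf hfz]
  ring_nf

lemma TendstoUniformlyOn.exists_eventually_dist_lt {ι α β : Type*} [PseudoMetricSpace α]
    [PseudoMetricSpace β] {l : Filter ι} {F : ι → α → β} {f : α → β} {s : Set α}
    (hF : TendstoUniformlyOn F f l s) (hs : IsCompact s) (hf : ContinuousOn f s) {η : ℝ}
    (hη : 0 < η) :
    ∃ ρ > 0, ∀ᶠ i in l, ∀ u ∈ s, ∀ x ∈ s, dist u x ≤ ρ → dist (F i u) (f x) < η := by
  obtain ⟨ρ, hρ, hfρ⟩ := Metric.uniformContinuousOn_iff_le.mp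
    (hs.uniformContinuousOn_of_continuous hf) (η / 2) (half_pos hη)
  refine ⟨ρ, hρ, (Metric.tendstoUniformlyOn_iff.mp hF (η / 2) (half_pos hη)).mono
    fun i hi u hu x hx hux => ?_⟩
  calc dist (F i u) (f x) ≤ dist (F i u) (f u) + dist (f u) (f x) := dist_triangle _ _ _
    _ < η / 2 + η / 2 :=
      add_lt_add_of_lt_of_le (by rw [dist_comm]; exact hi u hu) (hfρ u hu x hx hux)
    _ = η := add_halves η

lemma tendsto_add_mul_exp_neg_mul_atTop {a : ℝ} (ha : 0 < a) (C : ℝ) :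
    Tendsto (fun t => (t + C) * exp (-(t * a))) atTop (𝓝 0) := by
  have h1 := tendsto_rpow_mul_exp_neg_mul_atTop_nhds_zero 1 a ha
  have h0 := tendsto_rpow_mul_exp_neg_mul_atTop_nhds_zero 0 a ha
  simpa [add_mul, mul_comm] using h1.add (h0.const_mul C)

theorem stmt_18_general
    (γ : ℝ → ℝ) (hγ : Tendsto γ atTop atTop)
    (ψα : ℝ → ℝ → ℝ) (ψ : ℝ → ℝ)
    (hcont : ∀ α, ContinuousOn (ψα α) (Ico (0:ℝ) 1))
    (hψcont : ContinuousOn ψ (Ico (0:ℝ) 1))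
    (hconv : ∀ b ∈ Ico (0:ℝ) 1,
      TendstoUniformlyOn ψα ψ atTop (Icc (0:ℝ) b))
    (hψpos : ∀ s ∈ Ico (0:ℝ) 1, 0 < ψ s)
    (gα : ℝ → ℝ → ℝ)
    (hgα : ∀ α s, gα α s = Real.exp (-(γ α) * ∫ t in (0:ℝ)..s, ψα α t))
    (uα : ℝ → ℝ → ℝ)
    (huα : ∀ α x, uα α x = ∫ z in (0:ℝ)..x, (gα α z)⁻¹) :
    ∀ ε ∈ Ioo (0:ℝ) 1, ∀ δ > (0:ℝ), ∃ A : ℝ, ∀ α ≥ A,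
      ∀ x ∈ Icc ε (1 - ε),
        |uα α x * γ α * gα α x - 1 / ψ x| < δ := by
  rintro ε ⟨hε0, hε1⟩ δ hδ
  have hb : Icc 0 (1 - ε) ⊆ Ico 0 1 := fun u hu => ⟨hu.1, by linarith [hu.2]⟩
  obtain ⟨m, hm, hψm⟩ : ∃ m > 0, ∀ s ∈ Icc 0 (1 - ε), 2 * m ≤ ψ s := by
    obtain ⟨m₀, hm₀, hψm₀⟩ := isCompact_Icc.exists_forall_le' (hψcont.mono hb)
      fun s hs => hψpos s (hb hs)
    exact ⟨m₀ / 2, half_pos hm₀, fun s hs => by linarith [hψm₀ s hs]⟩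
  set η := min m (δ * m ^ 2 / 2)
  obtain ⟨ρ₀, hρ₀, hclose⟩ := (hconv (1 - ε) ⟨by linarith, by linarith⟩).exists_eventually_dist_lt
    isCompact_Icc (hψcont.mono hb) (lt_min hm (by positivity) : 0 < η)
  set ρ := min ρ₀ ε
  have hρ : 0 < ρ := lt_min hρ₀ hε0
  obtain ⟨A, hA⟩ := eventually_atTop.mp <| (hγ.eventually_gt_atTop 0).and <|
    (((tendsto_add_mul_exp_neg_mul_atTop (mul_pos hm hρ) (1 / m)).comp hγ).eventually_lt_const
      (half_pos hδ)).and hclose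
  refine ⟨A, fun α hα x hx => ?_⟩
  obtain ⟨hγα, htail, hψα⟩ := hA α hα
  have hρx : ρ ≤ x := (min_le_right _ _).trans hx.1
  simp only [huα, hgα]
  rw [mul_right_comm, integral_inv_exp_mul_exp _ (((hcont α).mono
    ((Icc_subset_Icc_right hx.2).trans hb)).intervalIntegrable_of_Icc (hρ.le.trans hρx)), mul_comm]
  calc _ ≤ η / m ^ 2 + (γ α * x + 1 / m) * exp (-(γ α * (m * ρ))) :=
        abs_mul_integral_exp_neg_integral_sub_one_div_le_of_dist_lt hγα hm (min_le_left _ _) hρ.le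
          hρx hx.2 ((hcont α).mono hb) hψm
          fun u hu y hy huy => hψα u hu y hy (huy.trans (min_le_left _ _))
    _ ≤ δ / 2 + (γ α + 1 / m) * exp (-(γ α * (m * ρ))) := by
        have hη : η / m ^ 2 ≤ δ / 2 := by
          rw [div_le_iff₀ (by positivity)]
          linarith [min_le_right m (δ * m ^ 2 / 2)]
        have hx1 : γ α * x ≤ γ α := mul_le_of_le_one_right hγα.le (by linarith [hx.2])
        gcongr
    _ < δ := by linarith [show (γ α + 1 / m) * exp (-(γ α * (m * ρ))) < δ / 2 from htail]

theorem stmt_18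
    (γ : ℝ → ℝ) (hγpos : ∀ α ≥ (1:ℝ), 0 < γ α) (hγ : Tendsto γ atTop atTop)
    (ψα : ℝ → ℝ → ℝ) (ψ : ℝ → ℝ)
    (hcont : ∀ α, ContinuousOn (ψα α) (Ico (0:ℝ) 1))
    (hψcont : ContinuousOn ψ (Ico (0:ℝ) 1))
    (hequi : ∀ b ∈ Ico (0:ℝ) 1, ∀ ε > (0:ℝ), ∃ δ > (0:ℝ), ∀ α ≥ (1:ℝ),
      ∀ x ∈ Icc (0:ℝ) b, ∀ y ∈ Icc (0:ℝ) b, |x - y| < δ → |ψα α x - ψα α y| < ε)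
    (hconv : ∀ b ∈ Ico (0:ℝ) 1,
      TendstoUniformlyOn ψα ψ atTop (Icc (0:ℝ) b))
    (hψpos : ∀ s ∈ Ico (0:ℝ) 1, 0 < ψ s)
    (gα : ℝ → ℝ → ℝ)
    (hgα : ∀ α s, gα α s = Real.exp (-(γ α) * ∫ t in (0:ℝ)..s, ψα α t))
    (uα : ℝ → ℝ → ℝ)
    (huα : ∀ α x, uα α x = ∫ z in (0:ℝ)..x, (gα α z)⁻¹) :
    ∀ ε ∈ Ioo (0:ℝ) 1, ∀ δ > (0:ℝ), ∃ A : ℝ, ∀ α ≥ A,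
      ∀ x ∈ Icc ε (1 - ε),
        |uα α x * γ α * gα α x - 1 / ψ x| < δ :=
  stmt_18_general γ hγ ψα ψ hcont hψcont hconv hψpos gα hgα uα huα
end

section
/- Let g be strictly decreasing, C¹ on [0,1] with g(0)=1, g(1)=0, and let σ_n ∼ PERM(g, n) be the g-random permutation. Then σ_n and σ_n⁻¹ have the same distribution: for every π ∈ S_n, ℙ(σ_n = π⁻¹) = ℙ(σ_n = π). -/
open Set Finset

/-- `Vperm n π i j` is `V_π(i/n, j/n) = (1/n)·#{t ∈ [n] : t ≤ i or π(t) ≤ j}`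
(with `t` ranging over `Fin n`, identified with `{1,…,n}` via `t ↦ t+1`). -/
noncomputable def Vperm (n : ℕ) (π : Equiv.Perm (Fin n)) (i j : ℕ) : ℝ :=
  ((Finset.univ.filter (fun t : Fin n => t.val + 1 ≤ i ∨ (π t).val + 1 ≤ j)).card : ℝ) / n

/-- The probability `ℙ(σ_n = π)` for `σ_n ∼ PERM(g,n)` (product formula). -/
noncomputable def permProb (g : ℝ → ℝ) (n : ℕ) (π : Equiv.Perm (Fin n)) : ℝ :=
  ∏ i : Fin n,
    (g (Vperm n π i.val (π i).val) - g (Vperm n π i.val (π i).val + 1 / n))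
      / g ((i.val : ℝ) / n)

/-! The denominators of `permProb` do not depend on `π`. Since the permutation matrix of `π⁻¹`
is the transpose of that of `π`, `V_{π⁻¹}(x, y) = V_π(y, x)`, so the numerator of the `i`-th
factor for `π⁻¹` is the numerator of the `π⁻¹ i`-th factor for `π`; reindexing the product by
`π` gives the claim. -/

lemma Vperm_inv (n : ℕ) (π : Equiv.Perm (Fin n)) (i j : ℕ) :
    Vperm n π⁻¹ i j = Vperm n π j i := by
  unfold Vperm
  congr 2
  apply Finset.card_equiv (π⁻¹ : Fin n ≃ Fin n)
  intro t
  simp [Or.comm]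

theorem stmt_19_general (g : ℝ → ℝ)
    (n : ℕ) (π : Equiv.Perm (Fin n)) :
    permProb g n π⁻¹ = permProb g n π := by
  set numerator : Fin n → ℝ := fun j =>
    g (Vperm n π j (π j)) - g (Vperm n π j (π j) + 1 / n)
  have numerator_inv (i : Fin n) :
      g (Vperm n π⁻¹ i (π⁻¹ i)) - g (Vperm n π⁻¹ i (π⁻¹ i) + 1 / n) = numerator (π⁻¹ i) := by
    simp only [numerator, Vperm_inv, Equiv.Perm.coe_inv, Equiv.apply_symm_apply]
  simp only [permProb, Finset.prod_div_distrib, numerator_inv]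
  rw [Equiv.prod_comp π⁻¹ numerator]

theorem stmt_19 (g : ℝ → ℝ)
    (hanti : StrictAntiOn g (Icc 0 1)) (hC1 : ContDiffOn ℝ 1 g (Icc 0 1))
    (hg0 : g 0 = 1) (hg1 : g 1 = 0)
    (n : ℕ) (hn : 0 < n) (π : Equiv.Perm (Fin n)) :
    permProb g n π⁻¹ = permProb g n π :=
  stmt_19_general g n π
end
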